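/- arXiv:0804.0978 — 4 statements merged into one kernel-verified Lean document; each statement's English description precedes it below -/
import Mathlib

section
/- Let R be a ring with unity and x ↦ x^⋄ an involution of R (additive, anti-multiplicative, of order two). Suppose xx^⋄ = x^⋄x for all x ∈ R. Then for every unit a ∈ R there exists a unit t ∈ R such that a^⋄ = ta, at = ta, and t^⋄ = t⁻¹. -/
/-- Lemma 1: in a ring with a normal involution, every unit `a` satisfies
`a^⋄ = t a` with `a t = t a` and `t^⋄ = t⁻¹` for some unit `t`. -/
theorem stmt_0 {R : Type*} [Ring R] (d : R → R)
    (hbij : Function.Bijective d)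
    (hadd : ∀ a b : R, d (a + b) = d a + d b)
    (hmul : ∀ a b : R, d (a * b) = d b * d a)
    (hord : ∀ a : R, d (d a) = a)
    (hnorm : ∀ x : R, x * d x = d x * x)
    (a : Rˣ) :
    ∃ t : Rˣ, d (a : R) = (t : R) * a ∧ (a : R) * t = (t : R) * a ∧
      d (t : R) = ((t⁻¹ : Rˣ) : R) := by
  have h1 : d 1 = 1 := by
    have h := hmul 1 (d 1)
    rw [one_mul, hord] at h
    rw [one_mul] at h; exact h.symm
  have hvi : d (a : R) * d ((a⁻¹ : Rˣ) : R) = 1 := by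
    rw [← hmul]; simp [h1]
  have hiv : d ((a⁻¹ : Rˣ) : R) * d (a : R) = 1 := by
    rw [← hmul]; simp [h1]
  set u : Rˣ := ⟨d (a : R), d ((a⁻¹ : Rˣ) : R), hvi, hiv⟩ with hu
  have hcomm : (a : R) * u = (u : R) * a := hnorm a
  have hcommU : (a * u : Rˣ) = u * a := Units.ext hcomm
  refine ⟨u * a⁻¹, ?_, ?_, ?_⟩
  · show d (a : R) = (u : R) * (a⁻¹ : Rˣ) * a
    rw [mul_assoc]; simp [u]
  · show (a : R) * ((u : R) * (a⁻¹ : Rˣ)) = (u : R) * (a⁻¹ : Rˣ) * a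
    rw [← mul_assoc, hcomm, mul_assoc]
    simp
  · show d ((u : R) * (a⁻¹ : Rˣ)) = (((u * a⁻¹)⁻¹ : Rˣ) : R)
    have hcommI : (a : R) * ((u⁻¹ : Rˣ) : R) = ((u⁻¹ : Rˣ) : R) * a := by
      have : (a * u⁻¹ : Rˣ) = u⁻¹ * a := by
        rw [mul_inv_eq_iff_eq_mul, mul_assoc, hcommU]; simp [← mul_assoc]
      exact_mod_cast congrArg Units.val this
    rw [hmul, hord]
    have hdai : d ((a⁻¹ : Rˣ) : R) = (u⁻¹ : Rˣ) := rfl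
    rw [hdai, mul_inv_rev, inv_inv, Units.val_mul, ← hcommI]
end

section
/- Let K be a commutative ring with unity, G a group, σ an anti-automorphism of G of order two, and f: G → U(K) a group homomorphism. The map x = Σ α_g g ↦ x^σ = Σ α_g f(g) σ(g) is an involution of the group ring KG if and only if g·σ(g) ∈ Ker(f) for all g ∈ G. -/
noncomputable def sigmaMap {K G : Type*} [CommRing K] [Group G] (σ : G → G) (f : G →* Kˣ)
    (x : MonoidAlgebra K G) : MonoidAlgebra K G :=
  Finsupp.sum x.coeff fun g a => MonoidAlgebra.single (σ g) (a * (f g : K))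

/-!
The map is additive by construction, so everything reduces to basis elements `a • g`.
There it is anti-multiplicative exactly because `σ` is and `f` takes values in a commutative
group, and applying it twice gives `a f(g σ(g)) • σ(σ(g)) = a f(g σ(g)) • g`, which is `a • g`
for every `a` iff `f(g σ(g)) = 1`.
-/

section

open MonoidAlgebra

variable {K G : Type*} [CommRing K] [Group G] (σ : G → G) (f : G →* Kˣ)

lemma sigmaMap_single (g : G) (a : K) :
    sigmaMap σ f (single g a) = single (σ g) (a * (f g : K)) :=
  Finsupp.sum_single_index (by simp)

lemma sigmaMap_add (x y : MonoidAlgebra K G) :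
    sigmaMap σ f (x + y) = sigmaMap σ f x + sigmaMap σ f y :=
  Finsupp.sum_add_index' (by simp) fun g a b => by rw [add_mul, single_add]

lemma sigmaMap_zero : sigmaMap σ f (0 : MonoidAlgebra K G) = 0 :=
  Finsupp.sum_zero_index

lemma sigmaMap_mul (hanti : ∀ g h : G, σ (g * h) = σ h * σ g) (x y : MonoidAlgebra K G) :
    sigmaMap σ f (x * y) = sigmaMap σ f y * sigmaMap σ f x := by
  induction x using induction_linear with
  | zero => simp [sigmaMap_zero]
  | add p q hp hq => rw [add_mul, sigmaMap_add, sigmaMap_add, hp, hq, mul_add]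
  | single g a =>
    induction y using induction_linear with
    | zero => simp [sigmaMap_zero]
    | add p q hp hq => rw [mul_add, sigmaMap_add, sigmaMap_add, hp, hq, add_mul]
    | single h b =>
      simp only [single_mul_single, sigmaMap_single, hanti, map_mul, Units.val_mul]
      ring_nf

lemma sigmaMap_sigmaMap_single (g : G) (a : K) :
    sigmaMap σ f (sigmaMap σ f (single g a)) = single (σ (σ g)) (a * (f (g * σ g) : K)) := by
  rw [sigmaMap_single, sigmaMap_single, mul_assoc, map_mul, Units.val_mul]

lemma sigmaMap_involutive_iff (hord : ∀ g : G, σ (σ g) = g) :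
    (∀ x : MonoidAlgebra K G, sigmaMap σ f (sigmaMap σ f x) = x) ↔ ∀ g : G, g * σ g ∈ f.ker := by
  constructor
  · intro hinv g
    have h := hinv (single g 1)
    rw [sigmaMap_sigmaMap_single, hord, single_right_inj, one_mul] at h
    exact Units.val_eq_one.mp h
  · intro hker x
    induction x using induction_linear with
    | zero => simp [sigmaMap_zero]
    | add p q hp hq => rw [sigmaMap_add, sigmaMap_add, hp, hq]
    | single g a => rw [sigmaMap_sigmaMap_single, hord, hker g, Units.val_one, mul_one]

end

theorem stmt_1_general {K G : Type*} [CommRing K] [Group G] (σ : G → G)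
    (hanti : ∀ g h : G, σ (g * h) = σ h * σ g)
    (hord : ∀ g : G, σ (σ g) = g)
    (f : G →* Kˣ) :
    ((∀ x y : MonoidAlgebra K G, sigmaMap σ f (x + y) = sigmaMap σ f x + sigmaMap σ f y) ∧
     (∀ x y : MonoidAlgebra K G, sigmaMap σ f (x * y) = sigmaMap σ f y * sigmaMap σ f x) ∧
     (∀ x : MonoidAlgebra K G, sigmaMap σ f (sigmaMap σ f x) = x)) ↔
    ∀ g : G, g * σ g ∈ f.ker :=
  ⟨fun h => (sigmaMap_involutive_iff σ f hord).mp h.2.2,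
    fun hker => ⟨sigmaMap_add σ f, sigmaMap_mul σ f hanti,
      (sigmaMap_involutive_iff σ f hord).mpr hker⟩⟩

/-- The map `x ↦ x^σ` is an involution of the group ring `KG` iff
`g * σ g ∈ Ker f` for all `g`. -/
theorem stmt_1 {K G : Type*} [CommRing K] [Group G] (σ : G → G)
    (hbij : Function.Bijective σ)
    (hanti : ∀ g h : G, σ (g * h) = σ h * σ g)
    (hord : ∀ g : G, σ (σ g) = g)
    (f : G →* Kˣ) :
    ((∀ x y : MonoidAlgebra K G, sigmaMap σ f (x + y) = sigmaMap σ f x + sigmaMap σ f y) ∧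
     (∀ x y : MonoidAlgebra K G, sigmaMap σ f (x * y) = sigmaMap σ f y * sigmaMap σ f x) ∧
     (∀ x : MonoidAlgebra K G, sigmaMap σ f (sigmaMap σ f x) = x)) ↔
    ∀ g : G, g * σ g ∈ f.ker :=
  stmt_1_general σ hanti hord f
end

section
/- Let KG be a σ-normal group ring of a non-Abelian group G, and suppose the subgroup H generated by W = {w ∈ G | σ(w) ≠ w} is Abelian. Then H has index 2 in G, G = ⟨H, b⟩ for some b with σ(b) = b, f(b) = -1, f(h) = 1 for all h ∈ H, and σ(h) = b⁻¹hb = bhb⁻¹ for all h ∈ H. -/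
section Group

variable {G : Type*} [Group G] {σ : G → G} {H : Subgroup G}

theorem exists_apply_ne_self_of_not_comm (hanti : ∀ g h : G, σ (g * h) = σ h * σ g)
    (hG : ∃ g h : G, g * h ≠ h * g) : ∃ w, σ w ≠ w := by
  by_contra! hid
  obtain ⟨g, h, hgh⟩ := hG
  exact hgh (by rw [← hid (g * h), hanti, hid g, hid h])

theorem exists_notMem_of_not_comm (hHab : ∀ x ∈ H, ∀ y ∈ H, x * y = y * x)
    (hG : ∃ g h : G, g * h ≠ h * g) : ∃ b, b ∉ H := by
  by_contra! hall
  obtain ⟨g, h, hgh⟩ := hG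
  exact hgh (hHab g (hall g) h (hall h))

theorem mem_of_apply_ne_self (hfix : ∀ g ∉ H, σ g = g) {w : G} (hw : σ w ≠ w) : w ∈ H :=
  not_not.mp (mt (hfix w) hw)

theorem apply_mul_eq_mul_of_notMem (hanti : ∀ g h : G, σ (g * h) = σ h * σ g)
    (hfix : ∀ g ∉ H, σ g = g) {h c : G} (hh : h ∈ H) (hc : c ∉ H) : σ h * c = c * h := by
  rw [← hfix c hc, ← hanti, hfix c hc, hfix _ ((mul_mem_cancel_right hh).not.mpr hc)]

theorem mul_apply_eq_mul_of_notMem (hanti : ∀ g h : G, σ (g * h) = σ h * σ g)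
    (hfix : ∀ g ∉ H, σ g = g) {h c : G} (hh : h ∈ H) (hc : c ∉ H) : c * σ h = h * c := by
  rw [← hfix c hc, ← hanti, hfix c hc, hfix _ ((mul_mem_cancel_left hh).not.mpr hc)]

theorem mul_mem_of_notMem (hanti : ∀ g h : G, σ (g * h) = σ h * σ g)
    (hfix : ∀ g ∉ H, σ g = g) {w : G} (hw : σ w ≠ w) {u v : G} (hu : u ∉ H) (hv : v ∉ H) :
    u * v ∈ H := by
  by_contra huv
  have hwH := mem_of_apply_ne_self hfix hw
  apply hw
  apply mul_right_cancel (b := u * v)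
  calc σ w * (u * v) = u * (σ w * v) := by
        rw [apply_mul_eq_mul_of_notMem hanti hfix hwH huv,
          apply_mul_eq_mul_of_notMem hanti hfix hwH hv, mul_assoc]
    _ = w * (u * v) := by
        rw [← mul_assoc, mul_apply_eq_mul_of_notMem hanti hfix hwH hu, mul_assoc]

theorem index_eq_two_of_mul_mem {b : G} (hb : b ∉ H) (hmul : ∀ u ∉ H, ∀ v ∉ H, u * v ∈ H) :
    H.index = 2 := by
  refine Subgroup.index_eq_two_iff.mpr ⟨b, fun g => ?_⟩
  by_cases hg : g ∈ H
  · exact Or.inr ⟨hg, (mul_mem_cancel_left hg).not.mpr hb⟩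
  · exact Or.inl ⟨hmul g hg b hb, hg⟩

theorem sup_closure_singleton_eq_top {b : G} (hb : b ∉ H)
    (hmul : ∀ u ∉ H, ∀ v ∉ H, u * v ∈ H) : H ⊔ Subgroup.closure {b} = ⊤ := by
  refine eq_top_iff.mpr fun g _ => ?_
  by_cases hg : g ∈ H
  · exact Subgroup.mem_sup_left hg
  · rw [← mul_inv_cancel_right g b]
    exact mul_mem (Subgroup.mem_sup_left (hmul g hg b hb))
      (Subgroup.mem_sup_right (inv_mem (Subgroup.subset_closure rfl)))

end Group

section GroupRing

variable {K G : Type*} [CommRing K] [Group G] {σ : G → G} {f : G →* Kˣ} {H : Subgroup G}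

theorem sigmaMap_single_add_single (u v : G) (a c : K) :
    sigmaMap σ f (MonoidAlgebra.single u a + MonoidAlgebra.single v c)
      = MonoidAlgebra.single (σ u) (a * (f u : K))
        + MonoidAlgebra.single (σ v) (c * (f v : K)) := by
  unfold sigmaMap
  rw [MonoidAlgebra.coeff_add, MonoidAlgebra.coeff_single, MonoidAlgebra.coeff_single,
    Finsupp.sum_add_index' (fun g => by simp)
      (fun g b₁ b₂ => by rw [add_mul]; exact MonoidAlgebra.single_add _ _ _),
    Finsupp.sum_single_index (by simp), Finsupp.sum_single_index (by simp)]

theorem val_apply_add_val_apply_eq_zero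
    (hanti : ∀ g h : G, σ (g * h) = σ h * σ g) (hord : ∀ g : G, σ (σ g) = g)
    (hnorm : ∀ x : MonoidAlgebra K G, x * sigmaMap σ f x = sigmaMap σ f x * x)
    (hfix : ∀ g ∉ H, σ g = g) {w c : G} (hw : σ w ≠ w) (hc : c ∉ H) :
    (f c : K) + f w = 0 := by
  have hwH := mem_of_apply_ne_self hfix hw
  have hσwH : σ w ∈ H := mem_of_apply_ne_self hfix (by rwa [hord, ne_comm])
  have hwc : w * c ∉ H := (mul_mem_cancel_left hwH).not.mpr hc
  have E := hnorm (MonoidAlgebra.single c 1 + MonoidAlgebra.single w 1)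
  simp only [sigmaMap_single_add_single, hfix c hc, add_mul, mul_add,
    MonoidAlgebra.single_mul_single, one_mul, mul_one,
    mul_apply_eq_mul_of_notMem hanti hfix hwH hc,
    ← apply_mul_eq_mul_of_notMem hanti hfix hwH hc] at E
  have hcoeff := congrArg (fun x : MonoidAlgebra K G => x.coeff (w * c)) E
  have hne : ∀ g ∈ H, g ≠ w * c := fun g hg h => hwc (h ▸ hg)
  simp only [MonoidAlgebra.coeff_add, MonoidAlgebra.coeff_single, Finsupp.add_apply,
    Finsupp.single_eq_same, Finsupp.single_eq_of_ne' (fun h => hw (mul_right_cancel h)),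
    Finsupp.single_eq_of_ne' (hne _ (mul_mem_of_notMem hanti hfix hw hc hc)),
    Finsupp.single_eq_of_ne' (hne _ (mul_mem hwH hσwH)),
    Finsupp.single_eq_of_ne' (hne _ (mul_mem hσwH hwH))] at hcoeff
  linear_combination hcoeff

theorem apply_eq_one_of_apply_ne_self
    (hanti : ∀ g h : G, σ (g * h) = σ h * σ g) (hord : ∀ g : G, σ (σ g) = g)
    (hnorm : ∀ x : MonoidAlgebra K G, x * sigmaMap σ f x = sigmaMap σ f x * x)
    (hfix : ∀ g ∉ H, σ g = g) {w b : G} (hw : σ w ≠ w) (hb : b ∉ H) : f w = 1 := by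
  have hwb : w * b ∉ H := (mul_mem_cancel_left (mem_of_apply_ne_self hfix hw)).not.mpr hb
  have hsum_b := val_apply_add_val_apply_eq_zero hanti hord hnorm hfix hw hb
  have hsum_wb := val_apply_add_val_apply_eq_zero hanti hord hnorm hfix hw hwb
  rw [map_mul, Units.val_mul] at hsum_wb
  have hprod : ((f w : K) - 1) * f b = 0 := by linear_combination hsum_wb - hsum_b
  exact Units.ext (sub_eq_zero.mp ((Units.mul_left_eq_zero (f b)).mp hprod))

end GroupRing

theorem stmt_6_general {K G : Type*} [CommRing K] [Group G] (σ : G → G) (f : G →* Kˣ)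
    (hanti : ∀ g h : G, σ (g * h) = σ h * σ g)
    (hord : ∀ g : G, σ (σ g) = g)
    (hnorm : ∀ x : MonoidAlgebra K G, x * sigmaMap σ f x = sigmaMap σ f x * x)
    (hG : ∃ g h : G, g * h ≠ h * g)
    (hHab : ∀ x ∈ Subgroup.closure {w : G | σ w ≠ w},
      ∀ y ∈ Subgroup.closure {w : G | σ w ≠ w}, x * y = y * x) :
    (Subgroup.closure {w : G | σ w ≠ w}).index = 2 ∧
    ∃ b : G, Subgroup.closure {w : G | σ w ≠ w} ⊔ Subgroup.closure {b} = ⊤ ∧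
      σ b = b ∧ f b = -1 ∧
      ∀ h ∈ Subgroup.closure {w : G | σ w ≠ w},
        f h = 1 ∧ σ h = b⁻¹ * h * b ∧ σ h = b * h * b⁻¹ := by
  set H := Subgroup.closure {w : G | σ w ≠ w}
  have hfix : ∀ g ∉ H, σ g = g := fun g hg => not_not.mp fun h => hg (Subgroup.subset_closure h)
  obtain ⟨w, hw⟩ := exists_apply_ne_self_of_not_comm hanti hG
  obtain ⟨b, hb⟩ := exists_notMem_of_not_comm hHab hG
  have hmul : ∀ u ∉ H, ∀ v ∉ H, u * v ∈ H := fun u hu v hv =>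
    mul_mem_of_notMem hanti hfix hw hu hv
  have hfW : ∀ w : G, σ w ≠ w → f w = 1 := fun w hw =>
    apply_eq_one_of_apply_ne_self hanti hord hnorm hfix hw hb
  have hfb : f b = -1 := by
    have hsum := val_apply_add_val_apply_eq_zero hanti hord hnorm hfix hw hb
    rw [hfW w hw, Units.val_one] at hsum
    exact Units.ext (by rw [Units.val_neg, Units.val_one]; linear_combination hsum)
  refine ⟨index_eq_two_of_mul_mem hb hmul, b, sup_closure_singleton_eq_top hb hmul,
    hfix b hb, hfb, fun h hh => ⟨?_, ?_, ?_⟩⟩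
  · exact (Subgroup.closure_le f.ker).mpr hfW hh
  · rw [mul_assoc, ← mul_apply_eq_mul_of_notMem hanti hfix hh hb, inv_mul_cancel_left]
  · rw [← apply_mul_eq_mul_of_notMem hanti hfix hh hb, mul_inv_cancel_right]

theorem stmt_6 {K G : Type*} [CommRing K] [Group G] (σ : G → G) (f : G →* Kˣ)
    (hanti : ∀ g h : G, σ (g * h) = σ h * σ g)
    (hord : ∀ g : G, σ (σ g) = g)
    (hinvol : ∀ g : G, f (g * σ g) = 1)
    (hnorm : ∀ x : MonoidAlgebra K G, x * sigmaMap σ f x = sigmaMap σ f x * x)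
    (hG : ∃ g h : G, g * h ≠ h * g)
    (hHab : ∀ x ∈ Subgroup.closure {w : G | σ w ≠ w},
      ∀ y ∈ Subgroup.closure {w : G | σ w ≠ w}, x * y = y * x) :
    (Subgroup.closure {w : G | σ w ≠ w}).index = 2 ∧
    ∃ b : G, Subgroup.closure {w : G | σ w ≠ w} ⊔ Subgroup.closure {b} = ⊤ ∧
      σ b = b ∧ f b = -1 ∧
      ∀ h ∈ Subgroup.closure {w : G | σ w ≠ w},
        f h = 1 ∧ σ h = b⁻¹ * h * b ∧ σ h = b * h * b⁻¹ :=
  stmt_6_general σ f hanti hord hnorm hG hHab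
end

section
/- Let KG be a σ-normal group ring with char(K) ≠ 2, G non-Abelian, W = {w ∈ G | σ(w) ≠ w}, and H = ⟨W⟩ Abelian. If b₁, b₂ ∈ G \ H, then b₁b₂ ∈ H; consequently H has index 2 in G. -/
theorem Subgroup.index_eq_two_of_mul_mem {G : Type*} [Group G] {H : Subgroup G} (hH : ∃ a, a ∉ H)
    (hmul : ∀ a b, a ∉ H → b ∉ H → a * b ∈ H) : H.index = 2 := by
  obtain ⟨a, ha⟩ := hH
  refine index_eq_two_iff_exists_notMem_and'.2 ⟨a, ha, fun b => ?_⟩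
  by_cases hb : b ∈ H
  · exact Or.inr hb
  · exact Or.inl (hmul a b ha hb)

namespace AntiInvolution

variable {G : Type*} [Group G] {σ : G → G}

theorem exists_apply_ne (hanti : ∀ g h : G, σ (g * h) = σ h * σ g)
    (hG : ∃ g h : G, g * h ≠ h * g) : ∃ w, σ w ≠ w := by
  obtain ⟨g, h, hgh⟩ := hG
  by_contra! hfix
  exact hgh (by simpa only [hfix] using hanti g h)

theorem apply_eq_of_notMem_closure {b : G} (hb : b ∉ Subgroup.closure {w | σ w ≠ w}) :
    σ b = b :=
  not_not.1 fun hne => hb (Subgroup.subset_closure hne)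

theorem conj_eq_apply_of_notMem_closure (hanti : ∀ g h : G, σ (g * h) = σ h * σ g) {b u : G}
    (hb : b ∉ Subgroup.closure {w | σ w ≠ w}) (hu : u ∈ Subgroup.closure {w | σ w ≠ w}) :
    b * u * b⁻¹ = σ u := by
  have hbu : b * u ∉ Subgroup.closure {w | σ w ≠ w} := fun h =>
    hb (by simpa using mul_mem h (inv_mem hu))
  have hcomm : b * u = σ u * b := by
    rw [← apply_eq_of_notMem_closure hbu, hanti, apply_eq_of_notMem_closure hb]
  rw [hcomm, mul_inv_cancel_right]

theorem mul_mem_closure_of_notMem (hanti : ∀ g h : G, σ (g * h) = σ h * σ g)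
    (hord : ∀ g : G, σ (σ g) = g) (hW : ∃ w, σ w ≠ w) {b₁ b₂ : G}
    (hb₁ : b₁ ∉ Subgroup.closure {w | σ w ≠ w}) (hb₂ : b₂ ∉ Subgroup.closure {w | σ w ≠ w}) :
    b₁ * b₂ ∈ Subgroup.closure {w | σ w ≠ w} := by
  obtain ⟨w, hw⟩ := hW
  have hwH : w ∈ Subgroup.closure {w | σ w ≠ w} := Subgroup.subset_closure hw
  have hσwH : σ w ∈ Subgroup.closure {w | σ w ≠ w} :=
    Subgroup.subset_closure (show σ (σ w) ≠ σ w by rw [hord]; exact hw.symm)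
  by_contra hb
  apply hw
  calc σ w = b₁ * b₂ * w * (b₁ * b₂)⁻¹ := (conj_eq_apply_of_notMem_closure hanti hb hwH).symm
    _ = b₁ * (b₂ * w * b₂⁻¹) * b₁⁻¹ := by group
    _ = σ (σ w) := by
      rw [conj_eq_apply_of_notMem_closure hanti hb₂ hwH,
        conj_eq_apply_of_notMem_closure hanti hb₁ hσwH]
    _ = w := hord w

end AntiInvolution

open AntiInvolution in
theorem stmt_17_general {G : Type*} [Group G] (σ : G → G)
    (hanti : ∀ g h : G, σ (g * h) = σ h * σ g)
    (hord : ∀ g : G, σ (σ g) = g)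
    (hG : ∃ g h : G, g * h ≠ h * g)
    (hHab : ∀ x ∈ Subgroup.closure {w : G | σ w ≠ w},
      ∀ y ∈ Subgroup.closure {w : G | σ w ≠ w}, x * y = y * x) :
    (∀ b₁ b₂ : G, b₁ ∉ Subgroup.closure {w : G | σ w ≠ w} →
        b₂ ∉ Subgroup.closure {w : G | σ w ≠ w} →
        b₁ * b₂ ∈ Subgroup.closure {w : G | σ w ≠ w}) ∧
    (Subgroup.closure {w : G | σ w ≠ w}).index = 2 := by
  have hmul : ∀ b₁ b₂ : G, b₁ ∉ Subgroup.closure {w : G | σ w ≠ w} →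
      b₂ ∉ Subgroup.closure {w : G | σ w ≠ w} →
      b₁ * b₂ ∈ Subgroup.closure {w : G | σ w ≠ w} := fun _ _ =>
    mul_mem_closure_of_notMem hanti hord (exists_apply_ne hanti hG)
  have hproper : ∃ b, b ∉ Subgroup.closure {w : G | σ w ≠ w} := by
    obtain ⟨g, h, hgh⟩ := hG
    by_contra! hall
    exact hgh (hHab g (hall g) h (hall h))
  exact ⟨hmul, Subgroup.index_eq_two_of_mul_mem hproper hmul⟩

theorem stmt_17 {K G : Type*} [CommRing K] [Group G] (σ : G → G) (f : G →* Kˣ)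
    (hanti : ∀ g h : G, σ (g * h) = σ h * σ g)
    (hord : ∀ g : G, σ (σ g) = g)
    (hinvol : ∀ g : G, f (g * σ g) = 1)
    (hnorm : ∀ x : MonoidAlgebra K G, x * sigmaMap σ f x = sigmaMap σ f x * x)
    (hchar : ringChar K ≠ 2)
    (hG : ∃ g h : G, g * h ≠ h * g)
    (hHab : ∀ x ∈ Subgroup.closure {w : G | σ w ≠ w},
      ∀ y ∈ Subgroup.closure {w : G | σ w ≠ w}, x * y = y * x) :
    (∀ b₁ b₂ : G, b₁ ∉ Subgroup.closure {w : G | σ w ≠ w} →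
        b₂ ∉ Subgroup.closure {w : G | σ w ≠ w} →
        b₁ * b₂ ∈ Subgroup.closure {w : G | σ w ≠ w}) ∧
    (Subgroup.closure {w : G | σ w ≠ w}).index = 2 :=
  stmt_17_general σ hanti hord hG hHab
end
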